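/- arXiv:1701.03297 — 5 statements merged into one kernel-verified Lean document; each statement's English description precedes it below -/
import Mathlib

section
/- Let G be a finite group acting on the alphabet A, let f, g, h be in G, and let x, y, z be words in A* with 1 ≤ |x| < |z| and z·g(y) = h(x)·f(z). Then there exist words r (nonempty) and s and natural numbers e and j with 0 ≤ j < |G| such that |rs| = |x| and z = ((rs)·f(rs)···f^{|G|−1}(rs))^e · (rs)·f(rs)···f^{j−1}(rs)·f^j(r). -/
/-!
Iterating `z · u = w · f(z)` with `w = h(x)` and `u = g(y)` gives
`z · u f(u) ··· f^(n-1)(u) = w f(w) ··· f^(n-1)(w) · f^n(z)` for every `n`. Writing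
`|z| = k|w| + ρ` with `1 ≤ ρ ≤ |w|` and cutting this identity (for `n = k + 1`) after `|z|`
letters gives `z = w f(w) ··· f^(k-1)(w) · f^k(w₁)` where `w₁` is the prefix of length `ρ`
of `w`. Since `f^|G| = 1`, the twisted power splits into `k / |G|` full periods.
-/

namespace List

variable {M A : Type*} [Monoid M] [MulAction M A]

/-- `twistedPow f w n` is the word `w · f(w) ··· f^(n-1)(w)`. -/
def twistedPow (f : M) (w : List A) (n : ℕ) : List A :=
  ((range n).map (fun i => w.map (fun a => (f ^ i) • a))).flatten

variable (f : M) (w : List A)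

@[simp]
theorem twistedPow_zero : twistedPow f w 0 = [] := rfl

theorem twistedPow_succ (n : ℕ) :
    twistedPow f w (n + 1) = twistedPow f w n ++ w.map (f ^ n • ·) := by
  simp [twistedPow, range_succ]

@[simp]
theorem length_twistedPow (n : ℕ) : (twistedPow f w n).length = n * w.length := by
  induction n with
  | zero => simp
  | succ n ih => simp [twistedPow_succ, ih, Nat.succ_mul]

theorem twistedPow_add (a b : ℕ) :
    twistedPow f w (a + b) = twistedPow f w a ++ (twistedPow f w b).map (f ^ a • ·) := by
  simp [twistedPow, range_add, map_flatten, Function.comp_def, pow_add, mul_smul]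

theorem twistedPow_mul_add_of_pow_eq_one {c : ℕ} (hc : f ^ c = 1) (e j : ℕ) :
    twistedPow f w (c * e + j)
      = (replicate e (twistedPow f w c)).flatten ++ twistedPow f w j := by
  induction e with
  | zero => simp
  | succ e ih =>
    rw [Nat.mul_succ, Nat.add_comm (c * e), Nat.add_assoc, twistedPow_add, hc, ih]
    simp [replicate_succ]

theorem append_twistedPow_eq_twistedPow_append {z u : List A}
    (heq : z ++ u = w ++ z.map (f • ·)) (n : ℕ) :
    z ++ twistedPow f u n = twistedPow f w n ++ z.map (f ^ n • ·) := by
  induction n with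
  | zero => simp
  | succ n ih =>
    have hshift : (w ++ z.map (f • ·)).map (f ^ n • ·)
        = w.map (f ^ n • ·) ++ z.map (f ^ (n + 1) • ·) := by
      simp [Function.comp_def, pow_succ, mul_smul]
    rw [twistedPow_succ, twistedPow_succ, ← append_assoc, ih, append_assoc, ← map_append, heq,
      hshift, append_assoc]

theorem eq_twistedPow_append_of_append_eq {z u : List A}
    (heq : z ++ u = w ++ z.map (f • ·)) {k ρ : ℕ} (hz : z.length = k * w.length + ρ)
    (hρ : ρ ≤ w.length) :
    z = twistedPow f w k ++ (w.take ρ).map (f ^ k • ·) := by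
  calc z = (z ++ twistedPow f u (k + 1)).take z.length := (take_left' rfl).symm
    _ = _ := by
      rw [append_twistedPow_eq_twistedPow_append f w heq, twistedPow_succ, append_assoc, hz,
        ← length_twistedPow f w k, take_length_add_append,
        take_append_of_le_length (by rwa [length_map]), map_take]

end List

/-- Twisted conjugacy (Proposition 4.1): if `z·g(y) = h(x)·f(z)` with `1 ≤ |x| < |z|`,
then `z = ((rs)·f(rs)···f^{|G|-1}(rs))^e · (rs)·f(rs)···f^{j-1}(rs) · f^j(r)`
for some nonempty `r`, word `s` with `|rs| = |x|`, and `e, j` with `j < |G|`. -/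
theorem stmt2 {A G : Type*} [Group G] [Fintype G] [MulAction G A]
    (f g h : G) (x y z : List A)
    (hx : 1 ≤ x.length) (hxz : x.length < z.length)
    (heq : z ++ y.map (fun a => g • a) =
           x.map (fun a => h • a) ++ z.map (fun a => f • a)) :
    ∃ r s : List A, r ≠ [] ∧ ∃ e j : ℕ, j < Fintype.card G ∧
      (r ++ s).length = x.length ∧
      z = (List.replicate e
            (((List.range (Fintype.card G)).map
              (fun i => (r ++ s).map (fun a => (f ^ i) • a))).flatten)).flatten
          ++ ((List.range j).map (fun i => (r ++ s).map (fun a => (f ^ i) • a))).flatten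
          ++ r.map (fun a => (f ^ j) • a) := by
  set w := x.map (fun a => h • a)
  have hw : w.length = x.length := List.length_map _
  obtain ⟨k, ρ, hz, hρ0, hρw⟩ :
      ∃ k ρ, z.length = k * w.length + ρ ∧ 0 < ρ ∧ ρ ≤ w.length :=
    ⟨(z.length - 1) / w.length, (z.length - 1) % w.length + 1,
      by have := Nat.div_add_mod' (z.length - 1) w.length; omega,
      Nat.succ_pos _, Nat.mod_lt _ (by omega)⟩
  obtain ⟨e, j, hj, rfl⟩ : ∃ e j, j < Fintype.card G ∧ k = Fintype.card G * e + j :=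
    ⟨k / Fintype.card G, k % Fintype.card G, Nat.mod_lt _ Fintype.card_pos,
      (Nat.div_add_mod k _).symm⟩
  have hfc : f ^ Fintype.card G = 1 := pow_card_eq_one
  have hzk := List.eq_twistedPow_append_of_append_eq f w heq hz hρw
  rw [List.twistedPow_mul_add_of_pow_eq_one f w hfc, pow_add, pow_mul, hfc, one_pow, one_mul] at hzk
  refine ⟨w.take ρ, w.drop ρ, ?_, e, j, hj, by rw [List.take_append_drop, hw], ?_⟩
  · rw [← List.length_pos_iff, List.length_take]; omega
  · simpa only [List.take_append_drop, List.twistedPow] using hzk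
end

section
/- Let G be a finite group acting on the alphabet A, let ε be a natural number, let f, g, h be in G, and let x, y, z be words in A* with 1 ≤ |x| ≤ ε and |z| ≥ 10·|G|·ε. If z·g(y) = h(x)·f(z), then z has a period of length at most |G|·ε. -/
/-- `w` has period `p`: letters at distance `p` agree. -/
def hasPeriod {A : Type*} (w : List A) (p : ℕ) : Prop :=
  ∀ i, i + p < w.length → w[i]? = w[i + p]?

/-
Comparing the two sides of `z·g(y) = h(x)·f(z)` at position `i + |x|` gives
`z[i + |x|] = f(z[i])`. Iterating `n = ord(f) ≤ |G|` times yields `z[i + n|x|] = z[i]`.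
-/

section Shift

variable {A : Type*} {z : List A} {d : ℕ} {φ : A → A}

theorem getElem?_add_length_of_append_eq_append_map {u v : List A}
    (heq : z ++ u = v ++ z.map φ) {i : ℕ} (hi : i + v.length < z.length) :
    z[i + v.length]? = z[i]?.map φ := by
  have hpos := congrArg (fun l : List A => l[i + v.length]?) heq
  simpa [List.getElem?_append_left hi, List.getElem?_append_right] using hpos

theorem getElem?_add_mul_of_shift
    (hshift : ∀ i, i + d < z.length → z[i + d]? = z[i]?.map φ) (k : ℕ) :
    ∀ i, i + k * d < z.length → z[i + k * d]? = z[i]?.map φ^[k] := by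
  induction k with
  | zero => simp
  | succ k ih =>
    intro i hi
    have hreassoc : i + (k + 1) * d = (i + d) + k * d := by ring
    rw [hreassoc] at hi ⊢
    rw [ih (i + d) hi, hshift i (by omega), Option.map_map, Function.iterate_succ]

theorem hasPeriod_mul_of_shift
    (hshift : ∀ i, i + d < z.length → z[i + d]? = z[i]?.map φ) {n : ℕ}
    (hn : φ^[n] = id) : hasPeriod z (n * d) := by
  intro i hi
  rw [getElem?_add_mul_of_shift hshift n i hi, hn, Option.map_id, id]

end Shift

theorem stmt3_general {A G : Type*} [Group G] [Fintype G] [MulAction G A]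
    (ε : ℕ) (f g h : G) (x y z : List A)
    (hx1 : 1 ≤ x.length) (hxε : x.length ≤ ε)
    (heq : z ++ y.map (fun a => g • a) =
           x.map (fun a => h • a) ++ z.map (fun a => f • a)) :
    ∃ p : ℕ, 0 < p ∧ p ≤ Fintype.card G * ε ∧ hasPeriod z p := by
  have hshift : ∀ i, i + x.length < z.length → z[i + x.length]? = z[i]?.map (f • ·) := by
    simpa using fun i => getElem?_add_length_of_append_eq_append_map heq (i := i)
  refine ⟨orderOf f * x.length, Nat.mul_pos (orderOf_pos f) hx1,
    Nat.mul_le_mul orderOf_le_card_univ hxε, hasPeriod_mul_of_shift hshift ?_⟩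
  rw [smul_iterate, pow_orderOf_eq_one]
  exact funext (one_smul G)

/-- Corollary 4.2 (first part): if `z·g(y) = h(x)·f(z)` with `1 ≤ |x| ≤ ε` and
`|z| ≥ 10·|G|·ε`, then `z` has a period of length at most `|G|·ε`. -/
theorem stmt3 {A G : Type*} [Group G] [Fintype G] [MulAction G A]
    (ε : ℕ) (f g h : G) (x y z : List A)
    (hx1 : 1 ≤ x.length) (hxε : x.length ≤ ε)
    (hz : 10 * Fintype.card G * ε ≤ z.length)
    (heq : z ++ y.map (fun a => g • a) =
           x.map (fun a => h • a) ++ z.map (fun a => f • a)) :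
    ∃ p : ℕ, 0 < p ∧ p ≤ Fintype.card G * ε ∧ hasPeriod z p :=
  stmt3_general ε f g h x y z hx1 hxε heq
end

section
/- Let G be a finite group acting on the alphabet A, and suppose z·g(y) = h(x)·f(z) with 1 ≤ |x| < |z|. If z = α·w·β is any factorization with |w| = |x|, then every letter b occurring in z satisfies b = f'(a) for some f' in G and some letter a occurring in w. -/
/-!
Reading `z·g(y) = h(x)·f(z)` letter by letter gives `z[i + |x|] = f(z[i])`: `z` is periodic
with period `|x|` up to the twist `f`. Moving by whole periods, every position of `z` is carried
by a power of `f` (or its inverse) to the position in the same residue class mod `|x|` inside any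
window of `|x|` consecutive positions, such as the one occupied by `w`.
-/

theorem List.getElem_add_length_eq_of_append_eq_append_map {A : Type*} {z u v : List A}
    {φ : A → A} (heq : z ++ u = v ++ z.map φ) (i : ℕ) (hi : i + v.length < z.length) :
    z[i + v.length] = φ z[i] := by
  have := congrArg (·[i + v.length]?) heq
  simpa [List.getElem?_append_left hi, List.getElem?_append_right, hi,
    show i < z.length by omega] using this

section TwistedPeriod

variable {M A : Type*} {l : List A} {k : ℕ}

theorem List.getElem_add_mul_eq_pow_smul [Monoid M] [MulAction M A] {f : M}
    (hper : ∀ i (hi : i + k < l.length), l[i + k] = f • l[i]) (i n : ℕ)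
    (hn : i + n * k < l.length) : l[i + n * k] = f ^ n • l[i] := by
  induction n with
  | zero => simp
  | succ n ih =>
    rw [add_mul, one_mul] at hn
    calc l[i + (n + 1) * k] = l[i + n * k + k] := by congr 1; ring
      _ = f ^ (n + 1) • l[i] := by rw [hper _ (by omega), ih (by omega), pow_succ', mul_smul]

theorem List.exists_smul_mem_take_drop [Group M] [MulAction M A] {f : M}
    (hper : ∀ i (hi : i + k < l.length), l[i + k] = f • l[i]) (hk : 0 < k)
    (m : ℕ) (hm : m + k ≤ l.length) :
    ∀ b ∈ l, ∃ g : M, ∃ a ∈ (l.drop m).take k, b = g • a := by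
  intro b hb
  obtain ⟨j, hj, rfl⟩ := List.getElem_of_mem hb
  have mem_window : ∀ i (hi : i < l.length), m ≤ i → i < m + k →
      l[i] ∈ (l.drop m).take k := fun i hi hmi hik => by
    rw [List.mem_iff_getElem]
    exact ⟨i - m, by simp only [length_take, length_drop, lt_inf_iff]; omega,
      by simp only [getElem_take, getElem_drop]; congr 1; omega⟩
  rcases le_or_gt m j with hmj | hjm
  · have hdiv := Nat.mod_add_div' (j - m) k
    have hmod := Nat.mod_lt (j - m) hk
    generalize (j - m) / k = n at *
    generalize (j - m) % k = r at *
    have hj' : m + r + n * k = j := by omega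
    subst hj'
    exact ⟨f ^ n, _, mem_window _ (by omega) (by omega) (by omega),
      List.getElem_add_mul_eq_pow_smul hper _ n hj⟩
  · have hdiv := Nat.mod_add_div' (m + k - 1 - j) k
    have hmod := Nat.mod_lt (m + k - 1 - j) hk
    generalize (m + k - 1 - j) / k = n at *
    generalize (m + k - 1 - j) % k = r at *
    have hi : j + n * k < l.length := by omega
    refine ⟨(f ^ n)⁻¹, _, mem_window _ hi (by omega) (by omega), ?_⟩
    rw [List.getElem_add_mul_eq_pow_smul hper _ _ hi, inv_smul_smul]

end TwistedPeriod

theorem stmt4_general {A G : Type*} [Group G] [MulAction G A]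
    (f g h : G) (x y z α w β : List A)
    (hx : 1 ≤ x.length)
    (heq : z ++ y.map (fun a => g • a) =
           x.map (fun a => h • a) ++ z.map (fun a => f • a))
    (hfac : z = α ++ w ++ β) (hw : w.length = x.length) :
    ∀ b ∈ z, ∃ f' : G, ∃ a ∈ w, b = f' • a := by
  have hper : ∀ i (hi : i + x.length < z.length), z[i + x.length] = f • z[i] := by
    simpa using List.getElem_add_length_eq_of_append_eq_append_map heq
  have hwin : (z.drop α.length).take x.length = w := by simp [hfac, hw]
  rw [← hwin]
  exact List.exists_smul_mem_take_drop hper hx α.length (by simp [hfac, hw])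

/-- Corollary 4.2 (second part): if `z·g(y) = h(x)·f(z)` with `1 ≤ |x| < |z|`
and `z = α·w·β` with `|w| = |x|`, then every letter `b` occurring in `z`
equals `f'(a)` for some `f' ∈ G` and some letter `a` occurring in `w`. -/
theorem stmt4 {A G : Type*} [Group G] [Fintype G] [MulAction G A]
    (f g h : G) (x y z α w β : List A)
    (hx : 1 ≤ x.length) (hxz : x.length < z.length)
    (heq : z ++ y.map (fun a => g • a) =
           x.map (fun a => h • a) ++ z.map (fun a => f • a))
    (hfac : z = α ++ w ++ β) (hw : w.length = x.length) :
    ∀ b ∈ z, ∃ f' : G, ∃ a ∈ w, b = f' • a :=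
  stmt4_general f g h x y z α w β hx heq hfac hw
end

section
/- Let w be a word that is δ-periodic (has a period at most δ) with |w| ≥ 2δ, and suppose w = p^e r = q^f s where p, q are primitive words with |p| ≤ |q| ≤ δ, r is a nonempty prefix of p, and s is a nonempty prefix of q. Then p = q, e = f ≥ 1, and r = s. -/
/-- A word is primitive if it is nonempty and not a proper power `r^e`, `e ≥ 2`. -/
def Primitive {A : Type*} (p : List A) : Prop :=
  p ≠ [] ∧ ∀ (r : List A) (e : ℕ), 2 ≤ e → p ≠ (List.replicate e r).flatten

/-!
Both `|p|` and `|q|` are periods of `w`, and `|p| + |q| ≤ 2δ ≤ |w|`, so by the periodicity lemma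
of Fine and Wilf `gcd |p| |q|` is a period of `w`, hence of its prefixes `p` and `q`. A primitive
word has no proper period dividing its length, so `gcd |p| |q| = |p| = |q|`, and `p = q` as
prefixes of `w` of the same length. Since `0 < |r| ≤ |p|`, the length of `w` then determines `e`,
and with it `r`.
-/

open List

section

variable {A : Type*}

theorem List.hasPeriod_flatten_replicate (n : ℕ) (p : List A) :
    HasPeriod (replicate n p).flatten p.length := by
  cases n with
  | zero => simp
  | succ m =>
    have htake : take p.length (replicate (m + 1) p).flatten = p := by simp [replicate_succ]
    have hcomm (n : ℕ) : (replicate n p).flatten ++ p = p ++ (replicate n p).flatten := by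
      rw [← flatten_cons, ← replicate_succ, replicate_succ', flatten_append, flatten_singleton]
    exact ⟨p, by rw [htake, hcomm]⟩

theorem List.hasPeriod_flatten_replicate_append {p r : List A} (e : ℕ) (hr : r <+: p) :
    HasPeriod ((replicate e p).flatten ++ r) p.length :=
  (hasPeriod_flatten_replicate (e + 1) p).infix <| by
    rw [replicate_succ', flatten_append, flatten_singleton]
    exact ((prefix_append_right_inj _).mpr hr).isInfix

theorem List.prefix_flatten_replicate_append {e : ℕ} (he : 0 < e) (p r : List A) :
    p <+: (replicate e p).flatten ++ r := by
  obtain ⟨m, rfl⟩ := Nat.exists_eq_add_of_lt he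
  simp only [zero_add, replicate_succ, flatten_cons, append_assoc]
  exact prefix_append _ _

theorem List.HasPeriod.eq_of_take_eq {u v : List A} {g : ℕ} (hg : 0 < g)
    (hu : HasPeriod u g) (hv : HasPeriod v g) (hlen : u.length = v.length)
    (htake : u.take g = v.take g) : u = v := by
  rw [hasPeriod_iff_forall_getElem?_mod] at hu hv
  apply ext_getElem?
  intro i
  rcases lt_or_ge i u.length with hi | hi
  · have hmod : i % g < g := Nat.mod_lt i hg
    rw [hu i hi, hv i (hlen ▸ hi), ← getElem?_take_of_lt hmod, htake, getElem?_take_of_lt hmod]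
  · rw [getElem?_eq_none hi, getElem?_eq_none (hlen ▸ hi)]

theorem List.HasPeriod.eq_flatten_replicate_take {u : List A} {g : ℕ} (hg : 0 < g)
    (hdvd : g ∣ u.length) (hu : HasPeriod u g) :
    u = (replicate (u.length / g) (u.take g)).flatten := by
  rcases Nat.eq_zero_or_pos u.length with hu0 | hpos
  · simp_all
  have hgu : g ≤ u.length := Nat.le_of_dvd hpos hdvd
  have hlen : (u.take g).length = g := length_take_of_le hgu
  refine hu.eq_of_take_eq hg ?_ ?_ ?_
  · simpa [hlen] using hasPeriod_flatten_replicate (u.length / g) (u.take g)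
  · simp [hlen, Nat.div_mul_cancel hdvd]
  · have := prefix_flatten_replicate_append (Nat.div_pos hgu hg) (u.take g) []
    rw [append_nil, prefix_iff_eq_take, hlen] at this
    exact this

theorem Primitive.eq_length_of_hasPeriod {u : List A} {g : ℕ} (hu : Primitive u) (hg : 0 < g)
    (hdvd : g ∣ u.length) (hper : HasPeriod u g) : g = u.length := by
  have hpos : 0 < u.length := length_pos_iff.mpr hu.1
  obtain ⟨m, hm⟩ := hdvd
  have hm0 : m ≠ 0 := by rintro rfl; omega
  obtain rfl | hm2 : m = 1 ∨ 2 ≤ m := by omega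
  · simp [hm]
  refine absurd (hper.eq_flatten_replicate_take hg ⟨m, hm⟩) (hu.2 _ _ ?_)
  rwa [hm, Nat.mul_div_cancel_left m hg]

theorem Primitive.eq_of_isPrefix {p q w : List A} (hp : Primitive p) (hq : Primitive q)
    (hpq : p.length ≤ q.length) (hpw : p <+: w) (hqw : q <+: w)
    (hwp : HasPeriod w p.length) (hwq : HasPeriod w q.length)
    (hlen : p.length + q.length ≤ w.length) : p = q := by
  have hp0 : 0 < p.length := length_pos_iff.mpr hp.1
  have hgcd : HasPeriod w (p.length.gcd q.length) := hwp.gcd hwq (by omega)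
  have hgcd_eq : p.length.gcd q.length = p.length :=
    hp.eq_length_of_hasPeriod (Nat.gcd_pos_of_pos_left _ hp0) (Nat.gcd_dvd_left _ _)
      (hgcd.infix hpw.isInfix)
  have hlen_eq : p.length = q.length :=
    hq.eq_length_of_hasPeriod hp0 (hgcd_eq ▸ Nat.gcd_dvd_right _ _) (hwp.infix hqw.isInfix)
  exact (prefix_of_prefix_length_le hpw hqw hpq).eq_of_length hlen_eq

theorem List.flatten_replicate_append_inj {p r s : List A} {e f : ℕ}
    (hr : 0 < r.length ∧ r.length ≤ p.length) (hs : 0 < s.length ∧ s.length ≤ p.length)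
    (h : (replicate e p).flatten ++ r = (replicate f p).flatten ++ s) : e = f ∧ r = s := by
  have hquot {k : ℕ} {t : List A} (ht : 0 < t.length ∧ t.length ≤ p.length) :
      (((replicate k p).flatten ++ t).length - 1) / p.length = k :=
    Nat.div_eq_of_lt_le (by simp; omega) (by simp [Nat.succ_mul]; omega)
  have hef : e = f := by rw [← hquot (k := e) hr, ← hquot (k := f) hs, h]
  subst hef
  exact ⟨rfl, append_cancel_left h⟩

end

theorem stmt5_general {A : Type*} (δ : ℕ) (w p q r s : List A) (e f : ℕ)
    (hlen : 2 * δ ≤ w.length)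
    (hw1 : w = (List.replicate e p).flatten ++ r)
    (hw2 : w = (List.replicate f q).flatten ++ s)
    (hp : Primitive p) (hq : Primitive q)
    (hpq : p.length ≤ q.length) (hqδ : q.length ≤ δ)
    (hr : r ≠ [] ∧ r <+: p) (hs : s ≠ [] ∧ s <+: q) :
    p = q ∧ e = f ∧ 1 ≤ e ∧ r = s := by
  have hr0 : 0 < r.length := length_pos_iff.mpr hr.1
  have hs0 : 0 < s.length := length_pos_iff.mpr hs.1
  have hrp : r.length ≤ p.length := hr.2.length_le
  have hsq : s.length ≤ q.length := hs.2.length_le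
  have hqw : q.length < w.length := by have := length_pos_iff.mpr hq.1; omega
  have he : 0 < e := Nat.pos_of_ne_zero <| by rintro rfl; simp [hw1] at hqw; omega
  have hf : 0 < f := Nat.pos_of_ne_zero <| by rintro rfl; simp [hw2] at hqw; omega
  obtain rfl : p = q := hp.eq_of_isPrefix hq hpq
    (hw1 ▸ prefix_flatten_replicate_append he p r) (hw2 ▸ prefix_flatten_replicate_append hf q s)
    (hw1 ▸ hasPeriod_flatten_replicate_append e hr.2)
    (hw2 ▸ hasPeriod_flatten_replicate_append f hs.2)
    (by omega)
  obtain ⟨rfl, rfl⟩ := flatten_replicate_append_inj ⟨hr0, hrp⟩ ⟨hs0, hsq⟩ (hw1.symm.trans hw2)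
  exact ⟨rfl, rfl, he, rfl⟩

/-- Lemma 4.4: a `δ`-periodic word of length `≥ 2δ` with two decompositions
`w = p^e r = q^f s` (`p, q` primitive, `|p| ≤ |q| ≤ δ`, `r, s` nonempty prefixes
of `p, q`) satisfies `p = q`, `e = f ≥ 1` and `r = s`. -/
theorem stmt5 {A : Type*} (δ : ℕ) (w p q r s : List A) (e f : ℕ)
    (hper : ∃ d, 0 < d ∧ d ≤ δ ∧ hasPeriod w d)
    (hlen : 2 * δ ≤ w.length)
    (hw1 : w = (List.replicate e p).flatten ++ r)
    (hw2 : w = (List.replicate f q).flatten ++ s)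
    (hp : Primitive p) (hq : Primitive q)
    (hpq : p.length ≤ q.length) (hqδ : q.length ≤ δ)
    (hr : r ≠ [] ∧ r <+: p) (hs : s ≠ [] ∧ s <+: q) :
    p = q ∧ e = f ∧ 1 ≤ e ∧ r = s :=
  stmt5_general δ w p q r s e f hlen hw1 hw2 hp hq hpq hqδ hr hs
end

section
/- A nonempty word p is primitive if and only if p^2 cannot be written as p^2 = x·p·y with both x and y nonempty words. -/
namespace List

variable {α : Type*}

theorem flatten_replicate_add (t : List α) (m n : ℕ) :
    (replicate (m + n) t).flatten = (replicate m t).flatten ++ (replicate n t).flatten := by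
  rw [replicate_add, flatten_append]

theorem flatten_replicate_succ_append_self (t : List α) (k : ℕ) :
    (replicate (k + 1) t).flatten ++ (replicate (k + 1) t).flatten =
      t ++ (replicate (k + 1) t).flatten ++ (replicate k t).flatten := by
  rw [← flatten_replicate_add, show k + 1 + (k + 1) = 1 + (k + 1) + k by omega,
    flatten_replicate_add, flatten_replicate_add, replicate_one, flatten_singleton]

theorem exists_eq_flatten_replicate_of_append_comm {x z : List α} (h : x ++ z = z ++ x) :
    ∃ t a b, x = (replicate a t).flatten ∧ z = (replicate b t).flatten := by
  induction hn : x.length + z.length using Nat.strong_induction_on generalizing x z with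
  | _ n ih =>
  rcases eq_or_ne x [] with rfl | hx
  · exact ⟨z, 0, 1, by simp, by simp⟩
  rcases eq_or_ne z [] with rfl | hz
  · exact ⟨x, 1, 0, by simp, by simp⟩
  rcases append_eq_append_iff.1 h with ⟨z', rfl, hz'⟩ | ⟨x', rfl, hx'⟩
  · have := length_pos_iff.2 hx
    obtain ⟨t, a, b, rfl, rfl⟩ := ih _ (by simp [← hn]; omega) hz' rfl
    exact ⟨t, a, a + b, rfl, (flatten_replicate_add t a b).symm⟩
  · have := length_pos_iff.2 hz
    obtain ⟨t, a, b, rfl, rfl⟩ := ih _ (by simp [← hn]; omega) hx'.symm rfl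
    exact ⟨t, b + a, b, (flatten_replicate_add t b a).symm, rfl⟩

theorem exists_eq_append_and_append_comm_of_append_self_eq {p x y : List α}
    (h : p ++ p = x ++ p ++ y) : ∃ z, p = x ++ z ∧ x ++ z = z ++ x := by
  have hlen : x.length + y.length = p.length := by
    have := congrArg length h
    simp at this
    omega
  obtain ⟨z, rfl⟩ : x <+: p :=
    prefix_of_prefix_length_le (by rw [h, append_assoc]; exact prefix_append _ _)
      (prefix_append p p) (by omega)
  have hzx : z ++ x ++ z = x ++ z ++ y := by simpa using h
  exact ⟨z, rfl, (append_inj hzx (by simp [Nat.add_comm])).1.symm⟩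

end List

open List

theorem not_primitive_append_of_append_comm {A : Type*} {x z : List A} (hx : x ≠ [])
    (hz : z ≠ []) (h : x ++ z = z ++ x) : ¬Primitive (x ++ z) := by
  rintro ⟨-, hprim⟩
  obtain ⟨t, a, b, rfl, rfl⟩ := exists_eq_flatten_replicate_of_append_comm h
  have ha : a ≠ 0 := by rintro rfl; simp at hx
  have hb : b ≠ 0 := by rintro rfl; simp at hz
  exact hprim t (a + b) (by omega) (flatten_replicate_add t a b).symm

/-- A nonempty word `p` is primitive iff `p²` has no factorization
`p² = x·p·y` with `x, y` both nonempty. -/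
theorem stmt6 {A : Type*} (p : List A) (hp : p ≠ []) :
    Primitive p ↔ ¬∃ x y : List A, x ≠ [] ∧ y ≠ [] ∧ p ++ p = x ++ p ++ y := by
  constructor
  · rintro hprim ⟨x, y, hx, hy, h⟩
    obtain ⟨z, rfl, hcomm⟩ := exists_eq_append_and_append_comm_of_append_self_eq h
    have hz : z ≠ [] := by
      rintro rfl
      simpa [hy] using congrArg length h
    exact not_primitive_append_of_append_comm hx hz hcomm hprim
  · refine fun hno => ⟨hp, fun t e he hpe => hno ?_⟩
    obtain ⟨k, rfl⟩ : ∃ k, e = k + 1 + 1 := ⟨e - 2, by omega⟩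
    have ht : t ≠ [] := by rintro rfl; simp at hpe; exact hp hpe
    refine ⟨t, (replicate (k + 1) t).flatten, ht, by simpa using ht, ?_⟩
    rw [hpe]
    exact flatten_replicate_succ_append_self t (k + 1)
end
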